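/- On the punctured unit disk Δ*, there exists δ > 0 such that the quotient invariant m_{Δ*}(z) = s_{Δ*}(z)/e_{Δ*}(z) satisfies m_{Δ*}(z) < 1 for all z with 0 < |z| < δ; moreover, m_{Δ*}(z) → 0 as z → 0. -/

import Mathlib

/-!
The squeezing function of `Δ*` is `s(z) = |z|`. The disc involution exchanging `z` and `0`
realises this value; conversely an injective `f : Δ* → Δ` with `f z = 0` extends holomorphically
across `0` to a map `F` that is still injective, so `f(Δ*)` omits `F 0`, and Schwarz's lemma gives
`|F 0| ≤ |z|`.

For the Fridman invariant, lift through the universal covering `q(τ) = exp (2πiτ) : ℍ → Δ*`.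
Analytic discs in `Δ*` lift to `ℍ`, so a Kobayashi ball of radius `artanh t` about `z` lies in
the image under `q` of the hyperbolic ball of radius `2 artanh t` about a lift `τ` of `z`. That ball
lies in a vertical strip of width `4 Im τ · t / (1 - t²)`; when this is at most `1`, `q` is
injective on it, and `q` composed with a Cayley map of the disc onto the ball shows `e(z) ≥ t`.
Since `Im τ = log (1/|z|) / 2π`, the choice `t = 1 / log (1/|z|)` works for `|z| ≤ e⁻²`, whence
`s(z)/e(z) ≤ -|z| log |z| ≤ 1 - |z|`, and this tends to `0`.
-/

open Set Metric

noncomputable section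

/-- Inverse hyperbolic tangent. -/
def artanh (x : ℝ) : ℝ := (1/2) * Real.log ((1 + x) / (1 - x))

/-- Poincaré distance on the unit disk. -/
def poincare (a b : ℂ) : ℝ := artanh ‖(a - b) / (1 - (starRingEnd ℂ) a * b)‖

variable {E : Type*} [NormedAddCommGroup E] [NormedSpace ℂ E]

/-- The Lempert function of a domain `D`. -/
def lempert (D : Set E) (z w : E) : ℝ :=
  sInf { r | ∃ (φ : ℂ → E) (α : ℂ), DifferentiableOn ℂ φ (ball 0 1) ∧
    MapsTo φ (ball 0 1) D ∧ φ 0 = z ∧ α ∈ ball (0:ℂ) 1 ∧ φ α = w ∧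
    r = artanh ‖α‖ }

/-- The Kobayashi pseudodistance of a domain `D`, as the infimum over chains of
analytic disks of the sum of the corresponding Poincaré lengths. -/
def kobayashi (D : Set E) (z w : E) : ℝ :=
  sInf { s | ∃ (n : ℕ) (p : ℕ → E), p 0 = z ∧ p n = w ∧ (∀ i ≤ n, p i ∈ D) ∧
    s = ∑ i ∈ Finset.range n, lempert D (p i) (p (i+1)) }

/-- The Kobayashi ball of radius `r` centered at `z` in `D`. -/
def kobayashiBall (D : Set E) (z : E) (r : ℝ) : Set E := { w ∈ D | kobayashi D z w < r }

/-- The Carathéodory pseudodistance of a domain `D`. -/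
def caratheodory (D : Set E) (z w : E) : ℝ :=
  sSup { r | ∃ f : E → ℂ, DifferentiableOn ℂ f D ∧ MapsTo f D (ball 0 1) ∧
    r = poincare (f z) (f w) }

/-- The Carathéodory ball of radius `r` centered at `z` in `D`. -/
def caratheodoryBall (D : Set E) (z : E) (r : ℝ) : Set E := { w ∈ D | caratheodory D z w < r }

/-- The squeezing function of a domain `D ⊆ E` (with respect to the unit ball of `E`). -/
def squeezing (D : Set E) (z : E) : ℝ :=
  sSup { r | ∃ f : E → E, DifferentiableOn ℂ f D ∧ InjOn f D ∧ MapsTo f D (ball 0 1) ∧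
    f z = 0 ∧ ball (0:E) r ⊆ f '' D }

/-- The Fridman invariant of a domain `D ⊆ E` (with respect to the unit ball of `E`). -/
def fridman (D : Set E) (z : E) : ℝ :=
  sSup { t | ∃ r > (0:ℝ), ∃ f : E → E, DifferentiableOn ℂ f (ball 0 1) ∧
    InjOn f (ball 0 1) ∧ MapsTo f (ball 0 1) D ∧ f 0 = z ∧
    kobayashiBall D z r ⊆ f '' (ball 0 1) ∧ t = Real.tanh r }

/-- The Fridman invariant defined via Carathéodory balls. -/
def fridmanC (D : Set E) (z : E) : ℝ :=
  sSup { t | ∃ r > (0:ℝ), ∃ f : E → E, DifferentiableOn ℂ f (ball 0 1) ∧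
    InjOn f (ball 0 1) ∧ MapsTo f (ball 0 1) D ∧ f 0 = z ∧
    caratheodoryBall D z r ⊆ f '' (ball 0 1) ∧ t = Real.tanh r }

/-- A set is balanced if `λ • z ∈ D` whenever `z ∈ D` and `|λ| ≤ 1`. -/
def IsBalanced (D : Set E) : Prop := ∀ z ∈ D, ∀ l : ℂ, ‖l‖ ≤ 1 → l • z ∈ D

/-- The Minkowski function of a (balanced) domain. -/
def minkowski (D : Set E) (z : E) : ℝ := sInf { t : ℝ | 0 < t ∧ (t⁻¹ : ℂ) • z ∈ D }

/-- `D` is homogeneous: its automorphism group acts transitively. -/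
def IsHomogeneous (D : Set E) : Prop :=
  ∀ z ∈ D, ∀ w ∈ D, ∃ f g : E → E, DifferentiableOn ℂ f D ∧ DifferentiableOn ℂ g D ∧
    MapsTo f D D ∧ MapsTo g D D ∧ (∀ x ∈ D, g (f x) = x) ∧ (∀ x ∈ D, f (g x) = x) ∧ f z = w

/-- `D` is completely hyperbolic: the Kobayashi pseudodistance is a distance and every
Kobayashi-Cauchy sequence in `D` converges (in the Kobayashi distance) to a point of `D`. -/
def IsCompletelyHyperbolic (D : Set E) : Prop :=
  (∀ z ∈ D, ∀ w ∈ D, kobayashi D z w = 0 → z = w) ∧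
  (∀ u : ℕ → E, (∀ n, u n ∈ D) →
    (∀ ε > (0:ℝ), ∃ N, ∀ m ≥ N, ∀ n ≥ N, kobayashi D (u m) (u n) < ε) →
    ∃ x ∈ D, Filter.Tendsto (fun n => kobayashi D (u n) x) Filter.atTop (nhds 0))

/-- The punctured unit disk in `ℂ`. -/
def puncturedDisk : Set ℂ := ball 0 1 \ {0}

end



open Set Metric Filter Topology

theorem artanh_eq_real_artanh {x : ℝ} (hx : x ∈ Icc (-1) 1) : artanh x = Real.artanh x :=
  (Real.artanh_eq_half_log hx).symm

theorem mem_puncturedDisk_iff {z : ℂ} : z ∈ puncturedDisk ↔ ‖z‖ < 1 ∧ z ≠ 0 := by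
  rw [puncturedDisk, Set.mem_sdiff, mem_ball_zero_iff, mem_singleton_iff]

section Mobius

open Complex ComplexConjugate

noncomputable def mobius (a z : ℂ) : ℂ := (a - z) / (1 - conj a * z)

theorem normSq_one_sub_conj_mul_sub_normSq_sub (a z : ℂ) :
    normSq (1 - conj a * z) - normSq (a - z) = (1 - normSq a) * (1 - normSq z) := by
  simp only [normSq_apply, sub_re, sub_im, mul_re, mul_im, one_re, one_im, conj_re, conj_im]
  ring

variable {a z : ℂ}

theorem one_sub_normSq_pos (ha : ‖a‖ < 1) : 0 < 1 - normSq a := by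
  rw [← Complex.sq_norm]
  nlinarith [norm_nonneg a]

theorem one_sub_conj_mul_ne_zero (ha : ‖a‖ < 1) (hz : ‖z‖ < 1) : 1 - conj a * z ≠ 0 := by
  intro h
  have : ‖conj a * z‖ = 1 := by rw [← sub_eq_zero.mp h, norm_one]
  rw [norm_mul, norm_conj] at this
  nlinarith [norm_nonneg a, norm_nonneg z]

theorem norm_mobius_lt_one (ha : ‖a‖ < 1) (hz : ‖z‖ < 1) : ‖mobius a z‖ < 1 := by
  rw [mobius, norm_div, div_lt_one (norm_pos_iff.mpr (one_sub_conj_mul_ne_zero ha hz)),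
    ← sq_lt_sq₀ (norm_nonneg _) (norm_nonneg _), Complex.sq_norm, Complex.sq_norm, ← sub_pos,
    normSq_one_sub_conj_mul_sub_normSq_sub]
  exact mul_pos (one_sub_normSq_pos ha) (one_sub_normSq_pos hz)

theorem mobius_mobius (ha : ‖a‖ < 1) (hz : ‖z‖ < 1) : mobius a (mobius a z) = z := by
  have hz' := one_sub_conj_mul_ne_zero ha hz
  have ha' : 1 - conj a * a ≠ 0 := one_sub_conj_mul_ne_zero ha ha
  have hnum : a - (a - z) / (1 - conj a * z) = z * (1 - conj a * a) / (1 - conj a * z) := by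
    rw [eq_div_iff hz', sub_mul, div_mul_cancel₀ _ hz']
    ring
  have hden : 1 - conj a * ((a - z) / (1 - conj a * z)) = (1 - conj a * a) / (1 - conj a * z) := by
    rw [eq_div_iff hz', sub_mul, mul_assoc, div_mul_cancel₀ _ hz']
    ring
  rw [mobius, mobius, hnum, hden, div_div_div_cancel_right₀ hz', mul_div_assoc, div_self ha',
    mul_one]

theorem mobius_self (a : ℂ) : mobius a a = 0 := by simp [mobius]

theorem mobius_zero (a : ℂ) : mobius a 0 = a := by simp [mobius]

theorem differentiableOn_mobius (ha : ‖a‖ < 1) : DifferentiableOn ℂ (mobius a) (ball 0 1) :=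
  DifferentiableOn.div (by fun_prop) (by fun_prop)
    fun _ hz ↦ one_sub_conj_mul_ne_zero ha (mem_ball_zero_iff.mp hz)

theorem mapsTo_mobius (ha : ‖a‖ < 1) : MapsTo (mobius a) (ball 0 1) (ball 0 1) := fun _ hz ↦
  mem_ball_zero_iff.mpr (norm_mobius_lt_one ha (mem_ball_zero_iff.mp hz))

end Mobius

theorem norm_apply_zero_le_of_apply_eq_zero {F : ℂ → ℂ}
    (hF : DifferentiableOn ℂ F (ball 0 1)) (hm : MapsTo F (ball 0 1) (closedBall 0 1))
    {z : ℂ} (hz : ‖z‖ < 1) (hFz : F z = 0) : ‖F 0‖ ≤ ‖z‖ := by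
  have h := Complex.norm_le_norm_of_mapsTo_ball (hF.comp (differentiableOn_mobius hz)
    (mapsTo_mobius hz)) (hm.comp (mapsTo_mobius hz)) (by simp [mobius_zero, hFz]) hz
  rwa [Function.comp_apply, mobius_self] at h

section Injectivity

variable {U : Set ℂ} {c : ℂ} {F : ℂ → ℂ}

/- If `F y = F c`, the open mapping theorem makes `F` of a small ball around `y` a neighbourhood
of `F c`, which then also contains `F u` for points `u ≠ c` close to `c`. -/
theorem DifferentiableOn.apply_ne_of_injOn_diff_singleton {y : ℂ} (hU : IsOpen U)
    (hUc : IsPreconnected U) (hF : DifferentiableOn ℂ F U) (hinj : InjOn F (U \ {c}))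
    (hc : c ∈ U) (hy : y ∈ U) (hyc : y ≠ c) : F y ≠ F c := by
  intro hFy
  rcases (hF.analyticOnNhd hU).is_constant_or_isOpen hUc with ⟨w, hw⟩ | hopen
  · have hnear : ∀ᶠ u in 𝓝[≠] y, u ∈ U \ {c} :=
      nhdsWithin_le_nhds (inter_mem (hU.mem_nhds hy) (isOpen_compl_singleton.mem_nhds hyc))
    obtain ⟨u, hu, huy⟩ := (hnear.and self_mem_nhdsWithin).exists
    exact huy (hinj hu ⟨hy, hyc⟩ (by rw [hw u hu.1, hw y hy]))
  set ρ := ‖y - c‖ / 2 with hρ_def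
  have hρ : 0 < ρ := half_pos (norm_pos_iff.mpr (sub_ne_zero.mpr hyc))
  have hV : IsOpen (F '' (ball y ρ ∩ U)) := hopen _ inter_subset_right (isOpen_ball.inter hU)
  have hFc : F c ∈ F '' (ball y ρ ∩ U) := ⟨y, ⟨mem_ball_self hρ, hy⟩, hFy⟩
  have hcont : ContinuousAt F c := (hF.differentiableAt (hU.mem_nhds hc)).continuousAt
  have hev : ∀ᶠ u in 𝓝[≠] c, u ∈ U ∩ F ⁻¹' (F '' (ball y ρ ∩ U)) ∩ ball c ρ :=
    nhdsWithin_le_nhds (inter_mem (inter_mem (hU.mem_nhds hc)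
      (hcont.preimage_mem_nhds (hV.mem_nhds hFc))) (ball_mem_nhds c hρ))
  obtain ⟨u, ⟨⟨huU, v, ⟨hvy, hvU⟩, hFv⟩, huc⟩, hu⟩ := (hev.and self_mem_nhdsWithin).exists
  rw [mem_ball, dist_eq_norm] at hvy huc
  have hvc : v ≠ c := by
    rintro rfl
    linarith [norm_sub_rev v y]
  obtain rfl : u = v := hinj ⟨huU, hu⟩ ⟨hvU, hvc⟩ hFv.symm
  linarith [norm_sub_le_norm_sub_add_norm_sub y u c, norm_sub_rev u y]

theorem DifferentiableOn.injOn_of_injOn_diff_singleton (hU : IsOpen U) (hUc : IsPreconnected U)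
    (hF : DifferentiableOn ℂ F U) (hinj : InjOn F (U \ {c})) : InjOn F U := by
  intro x hx y hy hxy
  by_cases hxc : x = c <;> by_cases hyc : y = c
  · rw [hxc, hyc]
  · subst hxc
    exact absurd hxy.symm (hF.apply_ne_of_injOn_diff_singleton hU hUc hinj hx hy hyc)
  · subst hyc
    exact absurd hxy (hF.apply_ne_of_injOn_diff_singleton hU hUc hinj hy hx hxc)
  · exact hinj ⟨hx, hxc⟩ ⟨hy, hyc⟩ hxy

end Injectivity

theorem exists_extension_of_injOn_puncturedDisk {f : ℂ → ℂ}
    (hfd : DifferentiableOn ℂ f puncturedDisk) (hfi : InjOn f puncturedDisk)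
    (hfm : MapsTo f puncturedDisk (ball 0 1)) :
    ∃ F : ℂ → ℂ, DifferentiableOn ℂ F (ball 0 1) ∧ EqOn F f puncturedDisk ∧
      MapsTo F (ball 0 1) (closedBall 0 1) ∧ F 0 ∉ f '' puncturedDisk := by
  set F := Function.update f 0 (limUnder (𝓝[≠] 0) f)
  have hF : DifferentiableOn ℂ F (ball 0 1) :=
    Complex.differentiableOn_update_limUnder_of_bddAbove (ball_mem_nhds 0 one_pos) hfd
      ⟨1, by rintro _ ⟨w, hw, rfl⟩; exact (mem_ball_zero_iff.mp (hfm hw)).le⟩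
  have hFf : EqOn F f puncturedDisk := fun w hw ↦ Function.update_of_ne hw.2 _ _
  have hFinj : InjOn F (ball 0 1) :=
    hF.injOn_of_injOn_diff_singleton isOpen_ball (convex_ball 0 1).isPreconnected
      (hfi.congr hFf.symm)
  refine ⟨F, hF, hFf, fun w hw ↦ ?_, ?_⟩
  · rcases eq_or_ne w 0 with rfl | hw0
    · have hcont : ContinuousAt F 0 :=
        (hF.differentiableAt (ball_mem_nhds 0 one_pos)).continuousAt
      refine isClosed_closedBall.mem_of_tendsto
        (hcont.tendsto.mono_left (nhdsWithin_le_nhds (s := {0}ᶜ))) ?_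
      filter_upwards [nhdsWithin_le_nhds (ball_mem_nhds (0 : ℂ) one_pos), self_mem_nhdsWithin]
        with u hu hu0
      rw [hFf ⟨hu, hu0⟩]
      exact ball_subset_closedBall (hfm ⟨hu, hu0⟩)
    · rw [hFf ⟨hw, hw0⟩]
      exact ball_subset_closedBall (hfm ⟨hw, hw0⟩)
  · rintro ⟨w, hw, hfw⟩
    rw [← hFf hw] at hfw
    exact hw.2 (hFinj hw.1 (mem_ball_self one_pos) hfw)

theorem isGreatest_squeezing_puncturedDisk {z : ℂ} (hz : z ∈ puncturedDisk) :
    IsGreatest { r | ∃ f : ℂ → ℂ, DifferentiableOn ℂ f puncturedDisk ∧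
      InjOn f puncturedDisk ∧ MapsTo f puncturedDisk (ball 0 1) ∧ f z = 0 ∧
      ball (0 : ℂ) r ⊆ f '' puncturedDisk } ‖z‖ := by
  obtain ⟨hz1, hz0⟩ := mem_puncturedDisk_iff.mp hz
  refine ⟨⟨mobius z, (differentiableOn_mobius hz1).mono sdiff_subset, ?_,
    (mapsTo_mobius hz1).mono_left sdiff_subset, mobius_self z, ?_⟩, ?_⟩
  · intro u hu v hv huv
    rw [← mobius_mobius hz1 (mem_puncturedDisk_iff.mp hu).1,
      ← mobius_mobius hz1 (mem_puncturedDisk_iff.mp hv).1, huv]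
  · intro y hy
    have hy1 : ‖y‖ < 1 := (mem_ball_zero_iff.mp hy).trans hz1
    refine ⟨mobius z y, mem_puncturedDisk_iff.mpr ⟨norm_mobius_lt_one hz1 hy1, ?_⟩,
      mobius_mobius hz1 hy1⟩
    intro h
    rw [← mobius_mobius hz1 hy1, h, mobius_zero] at hy
    exact (mem_ball_zero_iff.mp hy).false
  · rintro r ⟨f, hfd, hfi, hfm, hfz, hball⟩
    obtain ⟨F, hF, hFf, hFm, hF0⟩ := exists_extension_of_injOn_puncturedDisk hfd hfi hfm
    calc r ≤ ‖F 0‖ := not_lt.mp fun h ↦ hF0 (hball (mem_ball_zero_iff.mpr h))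
      _ ≤ ‖z‖ := norm_apply_zero_le_of_apply_eq_zero hF hFm hz1 (by rw [hFf hz, hfz])

theorem squeezing_puncturedDisk {z : ℂ} (hz : z ∈ puncturedDisk) :
    squeezing puncturedDisk z = ‖z‖ :=
  (isGreatest_squeezing_puncturedDisk hz).csSup_eq

section Cayley

open Complex ComplexConjugate

/-- For `0 < τ.im`, a biholomorphism of the unit disc onto the upper half-plane sending `0`
to `τ`. -/
noncomputable def cayleyAt (τ μ : ℂ) : ℂ := (τ - conj τ * μ) / (1 - μ)

variable {τ μ : ℂ}

theorem one_sub_ne_zero_of_norm_lt_one (hμ : ‖μ‖ < 1) : 1 - μ ≠ 0 := by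
  rintro h
  rw [← sub_eq_zero.mp h, norm_one] at hμ
  exact hμ.false

theorem sub_conj_ne_zero (hτ : τ.im ≠ 0) : τ - conj τ ≠ 0 := by
  rw [sub_conj]
  simpa using hτ

theorem cayleyAt_zero (τ : ℂ) : cayleyAt τ 0 = τ := by simp [cayleyAt]

theorem im_cayleyAt (τ μ : ℂ) :
    (cayleyAt τ μ).im = τ.im * (1 - normSq μ) / normSq (1 - μ) := by
  rw [cayleyAt, div_im, ← sub_div]
  congr 1
  simp only [normSq_apply, sub_re, sub_im, mul_re, mul_im, one_re, one_im, conj_re, conj_im]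
  ring

theorem im_cayleyAt_pos (hτ : 0 < τ.im) (hμ : ‖μ‖ < 1) : 0 < (cayleyAt τ μ).im := by
  rw [im_cayleyAt]
  exact div_pos (mul_pos hτ (one_sub_normSq_pos hμ))
    (normSq_pos.mpr (one_sub_ne_zero_of_norm_lt_one hμ))

theorem differentiableOn_cayleyAt (τ : ℂ) : DifferentiableOn ℂ (cayleyAt τ) (ball 0 1) :=
  DifferentiableOn.div (by fun_prop) (by fun_prop)
    fun _ hμ ↦ one_sub_ne_zero_of_norm_lt_one (mem_ball_zero_iff.mp hμ)

theorem cayleyAt_sub_div (hτ : τ.im ≠ 0) (hμ : μ ≠ 1) :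
    (cayleyAt τ μ - τ) / (cayleyAt τ μ - conj τ) = μ := by
  have h1 : 1 - μ ≠ 0 := sub_ne_zero.mpr hμ.symm
  have h2 : τ - conj τ * μ - (1 - μ) * conj τ ≠ 0 := by
    rw [show τ - conj τ * μ - (1 - μ) * conj τ = τ - conj τ by ring]
    exact sub_conj_ne_zero hτ
  rw [cayleyAt, div_sub' h1, div_sub' h1, div_div_div_cancel_right₀ h1, div_eq_iff h2]
  ring

theorem cayleyAt_sub_div_sub {v : ℂ} (hτ : τ.im ≠ 0) (hv : v ≠ conj τ) :
    cayleyAt τ ((v - τ) / (v - conj τ)) = v := by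
  have h1 : v - conj τ ≠ 0 := sub_ne_zero.mpr hv
  have h2 : v - conj τ - (v - τ) ≠ 0 := by
    rw [show v - conj τ - (v - τ) = τ - conj τ by ring]
    exact sub_conj_ne_zero hτ
  rw [cayleyAt, mul_div_assoc', sub_div' h1, one_sub_div h1, div_div_div_cancel_right₀ h1,
    div_eq_iff h2]
  ring

theorem norm_ofReal_mul_lt {t : ℝ} {z : ℂ} (ht : 0 < t) (hz : ‖z‖ < 1) :
    ‖(t : ℂ) * z‖ < t := by
  rw [norm_mul, norm_real, Real.norm_eq_abs, abs_of_pos ht]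
  exact mul_lt_of_lt_one_right ht hz

theorem mapsTo_ofReal_mul_ball {t : ℝ} (ht0 : 0 < t) (ht1 : t ≤ 1) :
    MapsTo (fun z : ℂ ↦ (t : ℂ) * z) (ball 0 1) (ball 0 1) := fun _ hz ↦
  mem_ball_zero_iff.mpr ((norm_ofReal_mul_lt ht0 (mem_ball_zero_iff.mp hz)).trans_le ht1)

end Cayley

namespace UpperHalfPlane

open Complex ComplexConjugate

theorem tanh_half_dist_eq_norm_div (σ τ : ℍ) :
    Real.tanh (dist σ τ / 2) = ‖((σ : ℂ) - τ) / (σ - conj (τ : ℂ))‖ := by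
  rw [tanh_half_dist, norm_div, dist_eq_norm, dist_eq_norm]

theorem half_dist_eq_artanh (σ τ : ℍ) :
    dist σ τ / 2 = Real.artanh ‖((σ : ℂ) - τ) / (σ - conj (τ : ℂ))‖ := by
  rw [← tanh_half_dist_eq_norm_div, Real.artanh_tanh]

theorem norm_sub_div_sub_conj_lt_one (σ τ : ℍ) :
    ‖((σ : ℂ) - τ) / (σ - conj (τ : ℂ))‖ < 1 := by
  rw [← tanh_half_dist_eq_norm_div]
  exact Real.tanh_lt_one _

theorem coe_ne_conj (σ τ : ℍ) : (σ : ℂ) ≠ conj (τ : ℂ) := fun h ↦ by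
  have := congrArg Complex.im h
  rw [conj_im, coe_im, coe_im] at this
  linarith [σ.im_pos, τ.im_pos]

theorem abs_re_sub_lt_of_dist_lt {σ τ : ℍ} {r : ℝ} (h : dist σ τ < r) :
    |σ.re - τ.re| < τ.im * Real.sinh r := by
  refine lt_of_le_of_lt ?_ (dist_lt_iff_dist_coe_center_lt.mp h)
  rw [dist_eq_norm, ← center_re τ r]
  exact abs_re_le_norm ((σ : ℂ) - center τ r)

theorem half_dist_mk_cayleyAt (τ : ℍ) {μ : ℂ} (hμ : ‖μ‖ < 1) :
    dist (mk (cayleyAt τ μ) (im_cayleyAt_pos τ.im_pos hμ)) τ / 2 = Real.artanh ‖μ‖ := by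
  rw [half_dist_eq_artanh, coe_mk, cayleyAt_sub_div τ.im_pos.ne'
    (sub_ne_zero.mp (one_sub_ne_zero_of_norm_lt_one hμ)).symm]

theorem half_dist_le_artanh_of_mapsTo {h : ℂ → ℂ} (hd : DifferentiableOn ℂ h (ball 0 1))
    (him : ∀ z ∈ ball (0 : ℂ) 1, 0 < (h z).im) {α : ℂ} (hα : α ∈ ball (0 : ℂ) 1) :
    dist (mk (h α) (him α hα)) (mk (h 0) (him 0 (mem_ball_self one_pos))) / 2 ≤
      Real.artanh ‖α‖ := by
  have h0 := him 0 (mem_ball_self one_pos)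
  have hden : ∀ z ∈ ball (0 : ℂ) 1, h z - conj (h 0) ≠ 0 := fun z hz ↦
    sub_ne_zero.mpr (coe_ne_conj (mk (h z) (him z hz)) (mk (h 0) h0))
  have hschwarz := Complex.norm_le_norm_of_mapsTo_ball
    (f := fun z ↦ (h z - h 0) / (h z - conj (h 0)))
    ((hd.sub_const _).div (hd.sub_const _) hden)
    (fun z hz ↦ mem_closedBall_zero_iff.mpr
      (norm_sub_div_sub_conj_lt_one (mk (h z) (him z hz)) (mk (h 0) h0)).le)
    (by simp) (mem_ball_zero_iff.mp hα)
  rw [half_dist_eq_artanh, coe_mk, coe_mk]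
  exact Real.artanh_le_artanh (by linarith [norm_nonneg ((h α - h 0) / (h α - conj (h 0)))])
    (mem_ball_zero_iff.mp hα) hschwarz

end UpperHalfPlane

section Covering

open Complex UpperHalfPlane Function.Periodic

theorem exists_log_of_ne_zero {c : ℂ} {r : ℝ} {φ : ℂ → ℂ}
    (hφ : DifferentiableOn ℂ φ (ball c r)) (h0 : ∀ z ∈ ball c r, φ z ≠ 0) :
    ∃ L : ℂ → ℂ, DifferentiableOn ℂ L (ball c r) ∧ ∀ z ∈ ball c r, exp (L z) = φ z := by
  rcases le_or_gt r 0 with hr | hr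
  · exact ⟨0, by simp [ball_eq_empty.mpr hr]⟩
  have hc : c ∈ ball c r := mem_ball_self hr
  have hφ' : DifferentiableOn ℂ (deriv φ) (ball c r) :=
    (hφ.analyticOnNhd isOpen_ball).deriv.differentiableOn
  obtain ⟨L, hLc, hL⟩ := ((hφ'.div hφ h0).isExactOn_ball).with_val_at c (log (φ c))
  have hderiv : ∀ z ∈ ball c r, HasDerivAt (fun w ↦ φ w * exp (-L w)) 0 z := by
    intro z hz
    have hφz := (hφ.differentiableAt (isOpen_ball.mem_nhds hz)).hasDerivAt
    refine (hφz.mul (hL z hz).neg.cexp).congr_deriv ?_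
    rw [Pi.div_apply]
    field_simp [h0 z hz]
    ring
  have hconst : ∀ z ∈ ball c r, φ z * exp (-L z) = φ c * exp (-L c) := fun z hz ↦
    isOpen_ball.is_const_of_deriv_eq_zero (convex_ball c r).isPreconnected
      (fun w hw ↦ (hderiv w hw).differentiableAt.differentiableWithinAt)
      (fun w hw ↦ (hderiv w hw).deriv) hz hc
  have hc1 : φ c * exp (-L c) = 1 := by
    rw [hLc, exp_neg, exp_log (h0 c hc), mul_inv_cancel₀ (h0 c hc)]
  refine ⟨L, fun z hz ↦ (hL z hz).differentiableAt.differentiableWithinAt, fun z hz ↦ ?_⟩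
  have := (hconst z hz).trans hc1
  rw [exp_neg, mul_inv_eq_one₀ (exp_ne_zero _)] at this
  exact this.symm

theorem qParam_add_intCast (z : ℂ) (n : ℤ) : qParam 1 (z + n) = qParam 1 z := by
  rw [qParam, qParam, ofReal_one, div_one, div_one, mul_add, exp_add, mul_comm _ (n : ℂ),
    exp_int_mul_two_pi_mul_I, mul_one]

theorem exists_eq_add_intCast_of_qParam_eq {a b : ℂ} (h : qParam 1 a = qParam 1 b) :
    ∃ n : ℤ, a = b + n := by
  obtain ⟨m, hm⟩ := qParam_left_inv_mod_period one_ne_zero a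
  obtain ⟨k, hk⟩ := qParam_left_inv_mod_period one_ne_zero b
  refine ⟨k - m, ?_⟩
  rw [h, hk, ofReal_one, mul_one, mul_one] at hm
  push_cast
  linear_combination -hm

theorem qParam_mem_puncturedDisk (τ : ℍ) : qParam 1 τ ∈ puncturedDisk :=
  mem_puncturedDisk_iff.mpr ⟨norm_qParam_lt_one one_pos τ.im_pos, qParam_ne_zero _⟩

theorem im_pos_of_qParam_mem_puncturedDisk {z : ℂ} (h : qParam 1 z ∈ puncturedDisk) :
    0 < z.im :=
  (norm_qParam_lt_iff one_pos 0 z).mp (by simpa using (mem_puncturedDisk_iff.mp h).1)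

theorem exists_qParam_eq {w : ℂ} (hw : w ∈ puncturedDisk) : ∃ τ : ℍ, qParam 1 τ = w :=
  have h := qParam_right_inv one_ne_zero (mem_puncturedDisk_iff.mp hw).2
  ⟨mk (invQParam 1 w) (im_pos_of_qParam_mem_puncturedDisk (by rwa [h])), h⟩

theorem exists_qParam_lift {φ : ℂ → ℂ} (hφ : DifferentiableOn ℂ φ (ball 0 1))
    (hm : MapsTo φ (ball 0 1) puncturedDisk) :
    ∃ h : ℂ → ℂ, DifferentiableOn ℂ h (ball 0 1) ∧
      ∀ z ∈ ball (0 : ℂ) 1, qParam 1 (h z) = φ z := by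
  obtain ⟨L, hLd, hL⟩ :=
    exists_log_of_ne_zero hφ fun z hz ↦ (mem_puncturedDisk_iff.mp (hm hz)).2
  refine ⟨fun z ↦ L z / (2 * Real.pi * Complex.I), hLd.div_const _, fun z hz ↦ ?_⟩
  rw [qParam, ofReal_one, div_one, mul_div_cancel₀ _ two_pi_I_ne_zero, hL z hz]

theorem exists_qParam_eq_half_dist_le {φ : ℂ → ℂ} (hφ : DifferentiableOn ℂ φ (ball 0 1))
    (hm : MapsTo φ (ball 0 1) puncturedDisk) {α : ℂ} (hα : α ∈ ball (0 : ℂ) 1) {τ : ℍ}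
    (hτ : qParam 1 τ = φ 0) :
    ∃ σ : ℍ, qParam 1 σ = φ α ∧ dist σ τ / 2 ≤ Real.artanh ‖α‖ := by
  obtain ⟨h, hd, hh⟩ := exists_qParam_lift hφ hm
  obtain ⟨n, hn⟩ :=
    exists_eq_add_intCast_of_qParam_eq (hτ.trans (hh 0 (mem_ball_self one_pos)).symm)
  have hh' : ∀ z ∈ ball (0 : ℂ) 1, qParam 1 (h z + n) = φ z := fun z hz ↦ by
    rw [qParam_add_intCast, hh z hz]
  have him : ∀ z ∈ ball (0 : ℂ) 1, 0 < (h z + n).im := fun z hz ↦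
    im_pos_of_qParam_mem_puncturedDisk ((hh' z hz).symm ▸ hm hz)
  refine ⟨mk _ (him α hα), hh' α hα, ?_⟩
  convert half_dist_le_artanh_of_mapsTo (hd.add_const (n : ℂ)) him hα using 3
  exact UpperHalfPlane.ext hn

end Covering

section Kobayashi

open Complex ComplexConjugate UpperHalfPlane Function.Periodic

variable {t : ℝ}

theorem differentiableOn_qParam_cayleyAt_mul (τ : ℂ) (ht0 : 0 < t) (ht1 : t ≤ 1) :
    DifferentiableOn ℂ (fun z ↦ qParam 1 (cayleyAt τ (t * z))) (ball 0 1) :=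
  differentiable_qParam.comp_differentiableOn
    ((differentiableOn_cayleyAt τ).comp (by fun_prop) (mapsTo_ofReal_mul_ball ht0 ht1))

theorem mapsTo_qParam_cayleyAt_mul (τ : ℍ) (ht0 : 0 < t) (ht1 : t ≤ 1) :
    MapsTo (fun z ↦ qParam 1 (cayleyAt τ (t * z))) (ball 0 1) puncturedDisk := fun _ hz ↦
  qParam_mem_puncturedDisk (mk _ (im_cayleyAt_pos τ.im_pos
    (mem_ball_zero_iff.mp (mapsTo_ofReal_mul_ball ht0 ht1 hz))))

theorem exists_disc_puncturedDisk {p q : ℂ} (hp : p ∈ puncturedDisk) (hq : q ∈ puncturedDisk) :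
    ∃ (φ : ℂ → ℂ) (α : ℂ), DifferentiableOn ℂ φ (ball 0 1) ∧
      MapsTo φ (ball 0 1) puncturedDisk ∧ φ 0 = p ∧ α ∈ ball (0 : ℂ) 1 ∧ φ α = q := by
  obtain ⟨τ, rfl⟩ := exists_qParam_eq hp
  obtain ⟨σ, rfl⟩ := exists_qParam_eq hq
  refine ⟨_, _, differentiableOn_qParam_cayleyAt_mul τ one_pos le_rfl,
    mapsTo_qParam_cayleyAt_mul τ one_pos le_rfl, by simp [cayleyAt_zero],
    mem_ball_zero_iff.mpr (norm_sub_div_sub_conj_lt_one σ τ), ?_⟩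
  simp only [ofReal_one, one_mul]
  rw [cayleyAt_sub_div_sub τ.im_pos.ne' (coe_ne_conj σ τ)]

theorem exists_qParam_eq_half_dist_lt_lempert {p q : ℂ} (hq : q ∈ puncturedDisk) {τ : ℍ}
    (hτ : qParam 1 τ = p) {ε : ℝ} (hε : 0 < ε) :
    ∃ σ : ℍ, qParam 1 σ = q ∧ dist σ τ / 2 < lempert puncturedDisk p q + ε := by
  have hp : p ∈ puncturedDisk := hτ ▸ qParam_mem_puncturedDisk τ
  obtain ⟨r, ⟨φ, α, hφd, hφm, hφ0, hα, hφα, rfl⟩, hr⟩ :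
      ∃ r ∈ _, r < lempert puncturedDisk p q + ε :=
    Real.lt_sInf_add_pos (by
      obtain ⟨φ, α, h⟩ := exists_disc_puncturedDisk hp hq
      exact ⟨_, φ, α, h.1, h.2.1, h.2.2.1, h.2.2.2.1, h.2.2.2.2, rfl⟩) hε
  obtain ⟨σ, hσ, hστ⟩ := exists_qParam_eq_half_dist_le hφd hφm hα (hτ.trans hφ0.symm)
  refine ⟨σ, hσ.trans hφα, hστ.trans_lt ?_⟩
  rwa [← artanh_eq_real_artanh ⟨by linarith [norm_nonneg α], (mem_ball_zero_iff.mp hα).le⟩]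

theorem exists_qParam_eq_half_dist_lt_sum_lempert (n : ℕ) {p : ℕ → ℂ}
    (hp : ∀ i ≤ n, p i ∈ puncturedDisk) {τ : ℍ} (hτ : qParam 1 τ = p 0) {ε : ℝ}
    (hε : 0 < ε) : ∃ σ : ℍ, qParam 1 σ = p n ∧
      dist σ τ / 2 < ∑ i ∈ Finset.range n, lempert puncturedDisk (p i) (p (i + 1)) + ε := by
  induction n generalizing ε with
  | zero => exact ⟨τ, hτ, by simpa using hε⟩
  | succ n ih =>
    obtain ⟨σ, hσ, hστ⟩ := ih (fun i hi ↦ hp i (by omega)) (half_pos hε)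
    obtain ⟨σ', hσ', hσ'σ⟩ :=
      exists_qParam_eq_half_dist_lt_lempert (hp (n + 1) le_rfl) hσ (half_pos hε)
    refine ⟨σ', hσ', ?_⟩
    rw [Finset.sum_range_succ]
    linarith [dist_triangle σ' σ τ]

theorem exists_qParam_eq_half_dist_lt_of_kobayashi_lt {z w : ℂ} (hw : w ∈ puncturedDisk)
    {τ : ℍ} (hτ : qParam 1 τ = z) {R : ℝ} (h : kobayashi puncturedDisk z w < R) :
    ∃ σ : ℍ, qParam 1 σ = w ∧ dist σ τ / 2 < R := by
  have hz : z ∈ puncturedDisk := hτ ▸ qParam_mem_puncturedDisk τ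
  obtain ⟨s, ⟨n, p, hp0, hpn, hp, rfl⟩, hs⟩ : ∃ s ∈ _, s < R := exists_lt_of_csInf_lt
    (by exact ⟨_, 1, fun i ↦ if i = 0 then z else w, rfl, rfl,
      fun i hi ↦ by interval_cases i <;> simpa, rfl⟩) h
  obtain ⟨σ, hσ, hστ⟩ :=
    exists_qParam_eq_half_dist_lt_sum_lempert n hp (hτ.trans hp0.symm) (sub_pos.mpr hs)
  exact ⟨σ, hσ.trans hpn, by linarith⟩

end Kobayashi

section Fridman

open Complex ComplexConjugate UpperHalfPlane Function.Periodic

theorem sinh_two_mul_artanh {t : ℝ} (ht : t ∈ Ioo (-1) 1) :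
    Real.sinh (2 * Real.artanh t) = 2 * t / (1 - t ^ 2) := by
  have h : 0 < 1 - t ^ 2 := by nlinarith [ht.1, ht.2]
  rw [Real.sinh_two_mul, Real.sinh_artanh ht, Real.cosh_artanh ht]
  field_simp
  rw [Real.sq_sqrt h.le]

theorem abs_re_cayleyAt_sub_lt (τ : ℍ) {μ : ℂ} {t : ℝ} (hμ : ‖μ‖ < t) (ht : t < 1) :
    |(cayleyAt τ μ).re - τ.re| < τ.im * (2 * t / (1 - t ^ 2)) := by
  have hμ1 : ‖μ‖ < 1 := hμ.trans ht
  have hdist := half_dist_mk_cayleyAt τ hμ1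
  have := Real.artanh_lt_artanh (by linarith [norm_nonneg μ]) ht hμ
  rw [← sinh_two_mul_artanh ⟨by linarith [norm_nonneg μ], ht⟩]
  exact abs_re_sub_lt_of_dist_lt (σ := mk _ (im_cayleyAt_pos τ.im_pos hμ1)) (by linarith)

variable {τ : ℍ} {t : ℝ}

theorem injOn_qParam_cayleyAt_mul (ht0 : 0 < t) (ht1 : t < 1)
    (hwidth : 4 * τ.im * t ≤ 1 - t ^ 2) :
    InjOn (fun z ↦ qParam 1 (cayleyAt τ (t * z))) (ball 0 1) := by
  have hstrip : ∀ z ∈ ball (0 : ℂ) 1, |(cayleyAt τ (t * z)).re - τ.re| < 1 / 2 := fun z hz ↦ by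
    refine (abs_re_cayleyAt_sub_lt τ (norm_ofReal_mul_lt ht0 (mem_ball_zero_iff.mp hz))
      ht1).trans_le ?_
    rw [le_div_iff₀ two_pos, mul_div_assoc', div_mul_eq_mul_div, div_le_iff₀ (by nlinarith)]
    linarith
  intro z₁ hz₁ z₂ hz₂ h
  obtain ⟨n, hn⟩ := exists_eq_add_intCast_of_qParam_eq h
  have hn0 : n = 0 := by
    have h₁ := hstrip z₁ hz₁
    have h₂ := hstrip z₂ hz₂
    rw [hn, add_re, intCast_re] at h₁
    have : |(n : ℝ)| < 1 := by
      rw [abs_lt] at h₁ h₂ ⊢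
      constructor <;> linarith
    exact Int.abs_lt_one_iff.mp (by exact_mod_cast this)
  rw [hn0, Int.cast_zero, add_zero] at hn
  have hne : ∀ z ∈ ball (0 : ℂ) 1, (t : ℂ) * z ≠ 1 := fun z hz h1 ↦ by
    simpa [h1] using (norm_ofReal_mul_lt ht0 (mem_ball_zero_iff.mp hz)).trans ht1
  have := cayleyAt_sub_div τ.im_pos.ne' (hne z₁ hz₁)
  rw [hn, cayleyAt_sub_div τ.im_pos.ne' (hne z₂ hz₂)] at this
  exact mul_left_cancel₀ (ofReal_ne_zero.mpr ht0.ne') this.symm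

theorem kobayashiBall_subset_image_qParam_cayleyAt_mul (ht0 : 0 < t) (ht1 : t < 1) :
    kobayashiBall puncturedDisk (qParam 1 τ) (Real.artanh t) ⊆
      (fun z ↦ qParam 1 (cayleyAt τ (t * z))) '' ball 0 1 := by
  rintro w ⟨hw, hk⟩
  obtain ⟨σ, rfl, hστ⟩ := exists_qParam_eq_half_dist_lt_of_kobayashi_lt hw rfl hk
  set μ := ((σ : ℂ) - τ) / (σ - conj (τ : ℂ))
  have hμ : ‖μ‖ < t := by
    rw [half_dist_eq_artanh] at hστ
    exact (Real.artanh_lt_artanh_iff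
      ⟨by linarith [norm_nonneg μ], norm_sub_div_sub_conj_lt_one σ τ⟩ ⟨by linarith, ht1⟩).mp hστ
  refine ⟨μ / t, ?_, ?_⟩
  · rw [mem_ball_zero_iff, norm_div, norm_real, Real.norm_eq_abs, abs_of_pos ht0]
    exact (div_lt_one ht0).mpr hμ
  · simp only
    rw [mul_div_cancel₀ _ (ofReal_ne_zero.mpr ht0.ne'), cayleyAt_sub_div_sub τ.im_pos.ne'
      (coe_ne_conj σ τ)]

theorem le_fridman_puncturedDisk (ht0 : 0 < t) (ht1 : t < 1)
    (hwidth : 4 * τ.im * t ≤ 1 - t ^ 2) : t ≤ fridman puncturedDisk (qParam 1 τ) := by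
  refine le_csSup ⟨1, ?_⟩ ⟨Real.artanh t, Real.artanh_pos ⟨ht0, ht1⟩, _,
    differentiableOn_qParam_cayleyAt_mul τ ht0 ht1.le, injOn_qParam_cayleyAt_mul ht0 ht1 hwidth,
    mapsTo_qParam_cayleyAt_mul τ ht0 ht1.le, by simp [cayleyAt_zero],
    kobayashiBall_subset_image_qParam_cayleyAt_mul ht0 ht1,
    (Real.tanh_artanh ⟨by linarith, ht1⟩).symm⟩
  rintro _ ⟨r, -, -, -, -, -, -, -, rfl⟩
  exact (Real.tanh_lt_one r).le

end Fridman

section Quotient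

open Function.Periodic

theorem inv_neg_log_le_fridman_puncturedDisk {z : ℂ} (hz : z ∈ puncturedDisk)
    (hsmall : ‖z‖ ≤ Real.exp (-2)) :
    (-Real.log ‖z‖)⁻¹ ≤ fridman puncturedDisk z := by
  obtain ⟨τ, rfl⟩ := exists_qParam_eq hz
  have hlog : -Real.log ‖qParam 1 (τ : ℂ)‖ = 2 * Real.pi * τ.im := by
    rw [norm_qParam, Real.log_exp, UpperHalfPlane.coe_im]
    ring
  have hL : 2 ≤ 2 * Real.pi * τ.im := by
    rw [← hlog, le_neg, ← Real.log_exp (-2)]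
    exact Real.log_le_log (norm_pos_iff.mpr (qParam_ne_zero _)) hsmall
  have hπ := Real.pi_gt_three
  have hsq : (2 * Real.pi * τ.im)⁻¹ ^ 2 ≤ 1 / 4 := by
    rw [inv_pow, ← one_div]
    exact one_div_le_one_div_of_le (by norm_num) (by nlinarith)
  rw [hlog]
  refine le_fridman_puncturedDisk (inv_pos.mpr (by linarith))
    (inv_lt_one_of_one_lt₀ (by linarith)) ?_
  rw [show 4 * τ.im * (2 * Real.pi * τ.im)⁻¹ = 2 / Real.pi by
    field_simp [τ.im_pos.ne', Real.pi_pos.ne']; ring, div_le_iff₀ Real.pi_pos]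
  nlinarith

theorem squeezing_div_fridman_mem_Icc {z : ℂ} (hz : z ∈ puncturedDisk)
    (hsmall : ‖z‖ ≤ Real.exp (-2)) :
    squeezing puncturedDisk z / fridman puncturedDisk z ∈ Icc 0 (Real.negMulLog ‖z‖) := by
  obtain ⟨hz1, hz0⟩ := mem_puncturedDisk_iff.mp hz
  have hlog : 0 < -Real.log ‖z‖ := neg_pos.mpr (Real.log_neg (norm_pos_iff.mpr hz0) hz1)
  have he := inv_neg_log_le_fridman_puncturedDisk hz hsmall
  rw [squeezing_puncturedDisk hz]
  refine ⟨div_nonneg (norm_nonneg z) ((inv_pos.mpr hlog).le.trans he), ?_⟩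
  calc ‖z‖ / fridman puncturedDisk z ≤ ‖z‖ / (-Real.log ‖z‖)⁻¹ :=
        div_le_div_of_nonneg_left (norm_nonneg z) (inv_pos.mpr hlog) he
    _ = Real.negMulLog ‖z‖ := by rw [div_inv_eq_mul, Real.negMulLog]; ring

end Quotient

/-- On the punctured unit disk, there is `δ > 0` such that the quotient invariant
`m_{Δ*}(z) = s_{Δ*}(z)/e_{Δ*}(z)` is `< 1` for `0 < |z| < δ`; moreover
`m_{Δ*}(z) → 0` as `z → 0` within `Δ*`. -/
theorem quotient_invariant_puncturedDisk :
    (∃ δ > (0:ℝ), ∀ z : ℂ, 0 < ‖z‖ → ‖z‖ < δ →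
      squeezing puncturedDisk z / fridman puncturedDisk z < 1) ∧
    Tendsto (fun z : ℂ => squeezing puncturedDisk z / fridman puncturedDisk z)
      (nhdsWithin 0 puncturedDisk) (nhds 0) := by
  have hδ : Real.exp (-2) < 1 := Real.exp_lt_one_iff.mpr (by norm_num)
  refine ⟨⟨Real.exp (-2), Real.exp_pos _, fun z hz0 hzδ ↦ ?_⟩, ?_⟩
  · have hz := mem_puncturedDisk_iff.mpr ⟨hzδ.trans hδ, norm_pos_iff.mp hz0⟩
    calc _ ≤ Real.negMulLog ‖z‖ := (squeezing_div_fridman_mem_Icc hz hzδ.le).2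
      _ ≤ 1 - ‖z‖ := Real.negMulLog_le_one_sub_self (norm_nonneg z)
      _ < 1 := by linarith
  · have hbound : ∀ᶠ z in 𝓝[puncturedDisk] 0,
        squeezing puncturedDisk z / fridman puncturedDisk z ∈ Icc 0 (Real.negMulLog ‖z‖) := by
      filter_upwards [self_mem_nhdsWithin,
        nhdsWithin_le_nhds (ball_mem_nhds (0 : ℂ) (Real.exp_pos (-2)))] with z hz hsmall
      exact squeezing_div_fridman_mem_Icc hz (mem_ball_zero_iff.mp hsmall).le
    have hlim : Tendsto (fun z : ℂ ↦ Real.negMulLog ‖z‖) (𝓝[puncturedDisk] 0) (𝓝 0) := by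
      have := ((Real.continuous_negMulLog.comp continuous_norm).tendsto (0 : ℂ)).mono_left
        (nhdsWithin_le_nhds (s := puncturedDisk))
      rwa [Function.comp_apply, norm_zero, Real.negMulLog_zero] at this
    exact tendsto_of_tendsto_of_tendsto_of_le_of_le' tendsto_const_nhds hlim
      (hbound.mono fun _ h ↦ h.1) (hbound.mono fun _ h ↦ h.2)
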